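/- Let A ∈ ℝ^{n×n} be symmetric positive semidefinite of rank k, and let 1 ≤ r ≤ k. Then there exists an index set J* ⊆ {1,…,n} with |J*| = r such that A(J*,J*) is invertible and ‖A − A_{J*}‖_F ≤ √(n−r) · (r+1) · √(Σ_{s=r+1}^{n} σ_s(A)²). -/

import Mathlib

open Matrix Finset

/-- Cross approximation `A_J = A(:,J) A(J,J)⁻¹ A(J,:)` built on the principal submatrix
indexed by the finite index set `J`. -/
noncomputable def crossApprox {n : ℕ} (A : Matrix (Fin n) (Fin n) ℝ) (J : Finset (Fin n)) :
    Matrix (Fin n) (Fin n) ℝ :=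
  A.submatrix id (Subtype.val : J → Fin n) *
    (A.submatrix (Subtype.val : J → Fin n) (Subtype.val : J → Fin n))⁻¹ *
    A.submatrix (Subtype.val : J → Fin n) id

/-- Determinant of the principal submatrix `A(J,J)`. -/
noncomputable def pminor {n : ℕ} (A : Matrix (Fin n) (Fin n) ℝ) (J : Finset (Fin n)) : ℝ :=
  (A.submatrix (Subtype.val : J → Fin n) (Subtype.val : J → Fin n)).det

/-- Nuclear norm: sum of the singular values of `M`, i.e. of the square roots of the
eigenvalues of `Mᴴ M`. -/
noncomputable def nuclearNorm {n : ℕ} (M : Matrix (Fin n) (Fin n) ℝ) : ℝ :=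
  ∑ i, Real.sqrt ((Matrix.isHermitian_conjTranspose_mul_self M).eigenvalues i)

/-- Frobenius norm. -/
noncomputable def frobNorm {n : ℕ} (M : Matrix (Fin n) (Fin n) ℝ) : ℝ :=
  Real.sqrt (∑ i, ∑ j, (M i j) ^ 2)

/-- Spectral norm: the largest singular value. -/
noncomputable def specNorm {n : ℕ} (M : Matrix (Fin n) (Fin n) ℝ) : ℝ :=
  ⨆ i, Real.sqrt ((Matrix.isHermitian_conjTranspose_mul_self M).eigenvalues i)

/-- Max norm: largest magnitude of an entry. -/
noncomputable def maxNorm {n : ℕ} (M : Matrix (Fin n) (Fin n) ℝ) : ℝ :=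
  ⨆ i, ⨆ j, |M i j|

/-- The tuple `f` sorted in nonincreasing order. -/
noncomputable def sortedDesc {m : ℕ} (f : Fin m → ℝ) : Fin m → ℝ :=
  fun i => -(((fun j => -f j) ∘ Tuple.sort fun j => -f j) i)

/-- `Esum M k` is the sum of all `k × k` principal minors of `M`. -/
noncomputable def Esum {n : ℕ} (M : Matrix (Fin n) (Fin n) ℝ) (k : ℕ) : ℝ :=
  ∑ K ∈ Finset.powersetCard k (Finset.univ : Finset (Fin n)), pminor M K

/-
Write `E_k(A)` for the sum of the `k × k` principal minors of `A`; by Vieta it is the `k`-th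
elementary symmetric function `e_k(λ)` of the eigenvalues. For `i ∉ J` the Schur complement gives
`det A(J+i) = det A(J) · (A - A_J)ᵢᵢ`, so `det A(J) · tr(A - A_J) = ∑_{i ∉ J} det A(J+i)`; summed
over all `|J| = r` this is `(r+1) E_{r+1}(A)`, while `∑_J det A(J) = E_r(A) > 0` because
`r ≤ rank A`. Averaging, some `J` with `det A(J) > 0` has
`tr(A - A_J) ≤ (r+1) E_{r+1}/E_r ≤ (r+1) ∑_{s ≥ r} λ_s`, the last step because every
`(r+1)`-subset of indices meets `{s ≥ r}`. Since `A - A_J` is positive semidefinite, its Frobenius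
norm is at most its trace, and Cauchy–Schwarz turns `∑_{s ≥ r} λ_s` into `√(n-r) ‖λ_{≥ r}‖₂`.
-/

namespace Finset

theorem sum_le_sqrt_card_mul_sqrt_sum_sq {ι : Type*} (s : Finset ι) (f : ι → ℝ) :
    ∑ i ∈ s, f i ≤ √(#s : ℝ) * √(∑ i ∈ s, f i ^ 2) := by
  rw [← Real.sqrt_mul (Nat.cast_nonneg _)]
  exact Real.le_sqrt_of_sq_le sq_sum_le_card_mul_sum_sq

theorem exists_pos_le_mul_of_sum_le {ι R : Type*} [CommRing R] [LinearOrder R]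
    [IsStrictOrderedRing R] {s : Finset ι} {a b : ι → R} {c : R}
    (ha : ∀ i ∈ s, 0 ≤ a i) (hb : ∀ i ∈ s, 0 ≤ b i) (hsum : 0 < ∑ i ∈ s, b i)
    (h : ∑ i ∈ s, a i ≤ c * ∑ i ∈ s, b i) : ∃ i ∈ s, 0 < b i ∧ a i ≤ c * b i := by
  have hb_filter : ∑ i ∈ s with 0 < b i, b i = ∑ i ∈ s, b i :=
    sum_filter_of_ne fun i hi hne => (hb i hi).lt_of_ne' hne
  have hne : (s.filter fun i => 0 < b i).Nonempty := by
    rw [nonempty_iff_ne_empty]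
    rintro hempty
    simp [← hb_filter, hempty] at hsum
  obtain ⟨i, hi, hle⟩ := exists_le_of_sum_le hne (f := a) (g := fun i => c * b i) <|
    calc ∑ i ∈ s with 0 < b i, a i ≤ ∑ i ∈ s, a i :=
          sum_le_sum_of_subset_of_nonneg (filter_subset _ _) fun i hi _ => ha i hi
      _ ≤ c * ∑ i ∈ s, b i := h
      _ = ∑ i ∈ s with 0 < b i, c * b i := by rw [← mul_sum, hb_filter]
  exact ⟨i, (mem_filter.1 hi).1, (mem_filter.1 hi).2, hle⟩

variable {ι : Type*} [Fintype ι] [DecidableEq ι]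

theorem sum_powersetCard_sum_compl_insert {M : Type*} [AddCommMonoid M] (r : ℕ)
    (G : Finset ι → ι → M) :
    ∑ J ∈ powersetCard r univ, ∑ i ∈ Jᶜ, G (insert i J) i =
      ∑ K ∈ powersetCard (r + 1) univ, ∑ i ∈ K, G K i := by
  rw [sum_sigma', sum_sigma']
  refine sum_nbij' (fun x => ⟨insert x.2 x.1, x.2⟩) (fun x => ⟨x.1.erase x.2, x.2⟩)
    ?_ ?_ ?_ ?_ fun _ _ => rfl
  · rintro ⟨J, i⟩ h
    simp only [mem_sigma, mem_powersetCard, mem_compl, subset_univ, true_and] at h ⊢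
    simp [card_insert_of_notMem h.2, h.1]
  · rintro ⟨K, i⟩ h
    simp only [mem_sigma, mem_powersetCard, subset_univ, true_and] at h ⊢
    simp [card_erase_of_mem h.2, h.1]
  · rintro ⟨J, i⟩ h
    simp only [mem_sigma, mem_compl] at h
    simp [erase_insert h.2]
  · rintro ⟨K, i⟩ h
    simp only [mem_sigma] at h
    simp [insert_erase h.2]

end Finset

theorem Fin.exists_le_val_of_card_eq {n r : ℕ} {K : Finset (Fin n)} (hK : #K = r + 1) :
    ∃ i ∈ K, r ≤ (i : ℕ) := by
  by_contra! h
  have : #(K.map Fin.valEmbedding) ≤ #(range r) := card_le_card fun x hx => by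
    obtain ⟨i, hi, rfl⟩ := mem_map.1 hx
    exact mem_range.2 (h i hi)
  simp [hK] at this

theorem Fin.card_filter_le_val {n r : ℕ} : #{i : Fin n | r ≤ (i : ℕ)} = n - r := by
  have hlt := Fin.card_filter_val_lt (n := n) (m := r)
  have hsplit := card_filter_add_card_filter_not (s := univ) (fun i : Fin n => (i : ℕ) < r)
  simp only [not_lt, card_univ, Fintype.card_fin] at hsplit
  omega

section ElementarySymmetric

variable {ι : Type*} [Fintype ι] {μ : ι → ℝ}

theorem esymm_map_univ_pos (hμ : ∀ i, 0 ≤ μ i) {r : ℕ} (hr : r ≤ #{i | μ i ≠ 0}) :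
    0 < (univ.val.map μ).esymm r := by
  obtain ⟨K, hK, hKcard⟩ := exists_subset_card_eq hr
  rw [Finset.esymm_map_val]
  refine lt_of_lt_of_le ?_ (single_le_sum (f := fun K => ∏ i ∈ K, μ i)
    (fun K _ => prod_nonneg fun i _ => hμ i) (mem_powersetCard.2 ⟨subset_univ K, hKcard⟩))
  exact prod_pos fun i hi => (hμ i).lt_of_ne' (mem_filter.1 (hK hi)).2

/-- Each `(r+1)`-set `K` contains some `i` with `p i`, and `∏_K μ = μ_i ∏_{K \ i} μ`; regrouping
the pairs `(K, i)` as `(K \ i, i)` bounds `e_{r+1}` by `e_r` times the sum of `μ` over `p`. -/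
theorem esymm_succ_map_univ_le [DecidableEq ι] (hμ : ∀ i, 0 ≤ μ i) {r : ℕ} (p : ι → Prop)
    [DecidablePred p] (hp : ∀ K : Finset ι, #K = r + 1 → ∃ i ∈ K, p i) :
    (univ.val.map μ).esymm (r + 1) ≤ (univ.val.map μ).esymm r * ∑ i with p i, μ i := by
  set tail : ι → ℝ := fun i => if p i then μ i else 0
  have htail : ∀ i, 0 ≤ tail i := fun i => ite_nonneg (hμ i) le_rfl
  simp only [Finset.esymm_map_val]
  calc ∑ K ∈ powersetCard (r + 1) univ, ∏ i ∈ K, μ i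
      ≤ ∑ K ∈ powersetCard (r + 1) univ, ∑ i ∈ K, tail i * ∏ j ∈ K.erase i, μ j := by
        refine sum_le_sum fun K hK => ?_
        obtain ⟨i, hiK, hi⟩ := hp K (mem_powersetCard.1 hK).2
        calc ∏ j ∈ K, μ j = tail i * ∏ j ∈ K.erase i, μ j := by
              simp only [tail, if_pos hi, mul_prod_erase K μ hiK]
          _ ≤ _ := single_le_sum (f := fun i => tail i * ∏ j ∈ K.erase i, μ j)
                (fun j _ => mul_nonneg (htail j) (prod_nonneg fun k _ => hμ k)) hiK
    _ = ∑ L ∈ powersetCard r univ, (∏ j ∈ L, μ j) * ∑ i ∈ Lᶜ, tail i := by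
        rw [← sum_powersetCard_sum_compl_insert]
        refine sum_congr rfl fun L _ => ?_
        rw [mul_sum]
        refine sum_congr rfl fun i hi => ?_
        rw [erase_insert (mem_compl.1 hi), mul_comm]
    _ ≤ ∑ L ∈ powersetCard r univ, (∏ j ∈ L, μ j) * ∑ i, tail i := by
        gcongr with L _
        · exact prod_nonneg fun j _ => hμ j
        · exact fun i _ _ => htail i
        · exact subset_univ _
    _ = (∑ L ∈ powersetCard r univ, ∏ j ∈ L, μ j) * ∑ i with p i, μ i := by
        rw [← sum_mul, sum_filter]

end ElementarySymmetric

open Polynomial in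
theorem Matrix.IsHermitian.sum_det_submatrix_eq_esymm {m : Type*} [Fintype m] [DecidableEq m]
    {A : Matrix m m ℝ} (hA : A.IsHermitian) (k : ℕ) :
    ∑ s ∈ univ.powersetCard k, (A.submatrix (Subtype.val : s → m) Subtype.val).det =
      (univ.val.map hA.eigenvalues).esymm k := by
  rcases le_or_gt k (Fintype.card m) with hk | hk
  · have hcoeff := A.charpoly_coeff_eq_sum_minors k hk
    rw [hA.charpoly_eq, Finset.prod_eq_multiset_prod] at hcoeff
    simp only [RCLike.ofReal_real_eq_id, id_eq] at hcoeff
    rw [← Function.comp_def (fun t => X - C t), ← Multiset.map_map,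
      Multiset.prod_X_sub_C_coeff _ (by simp)] at hcoeff
    simp only [Multiset.card_map, card_val, card_univ, Nat.sub_sub_self hk] at hcoeff
    exact (mul_left_cancel₀ (pow_ne_zero k (neg_ne_zero.2 one_ne_zero)) hcoeff).symm
  · rw [Finset.esymm_map_val, powersetCard_eq_empty.2 (by rwa [card_univ]), sum_empty,
      sum_empty]

theorem Matrix.PosSemidef.sq_apply_le {m : Type*} [Fintype m] {M : Matrix m m ℝ}
    (hM : M.PosSemidef) (i j : m) : M i j ^ 2 ≤ M i i * M j j := by
  have hdet := (hM.submatrix ![i, j]).det_nonneg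
  rw [det_fin_two] at hdet
  have hsymm : M j i = M i j := by simpa using hM.1.apply i j
  simp only [submatrix_apply, Matrix.cons_val_zero, Matrix.cons_val_one, hsymm] at hdet
  nlinarith

theorem Matrix.PosSemidef.frobNorm_le_trace {n : ℕ} {M : Matrix (Fin n) (Fin n) ℝ}
    (hM : M.PosSemidef) : frobNorm M ≤ M.trace := by
  refine Real.sqrt_le_iff.2 ⟨hM.trace_nonneg, ?_⟩
  rw [trace, sq, sum_mul_sum]
  exact sum_le_sum fun i _ => sum_le_sum fun j _ => hM.sq_apply_le i j

section CrossApprox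

variable {n : ℕ} {A : Matrix (Fin n) (Fin n) ℝ} {J : Finset (Fin n)}

theorem pminor_nonneg (hA : A.PosSemidef) (J : Finset (Fin n)) : 0 ≤ pminor A J :=
  (hA.submatrix _).det_nonneg

theorem submatrix_crossApprox (hd : pminor A J ≠ 0) :
    (crossApprox A J).submatrix Subtype.val id = A.submatrix (Subtype.val : J → Fin n) id := by
  have hunit : IsUnit (A.submatrix (Subtype.val : J → Fin n) Subtype.val).det :=
    isUnit_iff_ne_zero.2 hd
  rw [crossApprox, Matrix.mul_assoc, submatrix_mul _ _ _ id _ Function.bijective_id,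
    submatrix_id_id, submatrix_submatrix, Function.id_comp, Function.comp_id,
    ← Matrix.mul_assoc, mul_nonsing_inv _ hunit, Matrix.one_mul]

theorem sub_crossApprox_apply_of_mem (hd : pminor A J ≠ 0) {i : Fin n} (hi : i ∈ J)
    (j : Fin n) : (A - crossApprox A J) i j = 0 := by
  have := congrFun₂ (submatrix_crossApprox hd) ⟨i, hi⟩ j
  simpa [sub_eq_zero] using this.symm

theorem pminor_insert (hd : pminor A J ≠ 0) {i : Fin n} (hi : i ∉ J) :
    pminor A (insert i J) = pminor A J * (A - crossApprox A J) i i := by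
  set C := A.submatrix (Subtype.val : J → Fin n) Subtype.val
  let _ : Invertible C := invertibleOfIsUnitDet C (isUnit_iff_ne_zero.2 hd)
  let e : J ⊕ Unit ≃ ↥(insert i J) :=
    (Equiv.optionEquivSumPUnit J).symm.trans (subtypeInsertEquivOption hi).symm
  have hblocks :
      (A.submatrix (Subtype.val : ↥(insert i J) → Fin n) Subtype.val).submatrix e e =
        fromBlocks C (A.submatrix Subtype.val fun _ : Unit => i)
          (A.submatrix (fun _ : Unit => i) Subtype.val)
          (A.submatrix (fun _ : Unit => i) fun _ => i) := by
    ext (a | _) (b | _) <;> rfl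
  rw [pminor, ← det_submatrix_equiv_self e, hblocks, det_fromBlocks₁₁, det_unique (n := Unit)]
  simp [crossApprox, mul_apply, invOf_eq_nonsing_inv, C, pminor]

theorem pminor_mul_trace_sub_crossApprox (hd : pminor A J ≠ 0) :
    pminor A J * (A - crossApprox A J).trace = ∑ i ∈ Jᶜ, pminor A (insert i J) := by
  rw [trace, ← sum_compl_add_sum J, sum_eq_zero (f := (A - crossApprox A J).diag) fun i hi => sub_crossApprox_apply_of_mem hd hi i,
    add_zero, mul_sum]
  exact sum_congr rfl fun i hi => (pminor_insert hd (mem_compl.1 hi)).symm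

/-- `A - A_J` is the Schur complement of `A(J,J)` in the positive semidefinite matrix
`[[A(J,J), A(J,:)], [A(:,J), A]]`. -/
theorem Matrix.PosSemidef.sub_crossApprox (hA : A.PosSemidef) (hd : pminor A J ≠ 0) :
    (A - crossApprox A J).PosSemidef := by
  set C := A.submatrix (Subtype.val : J → Fin n) Subtype.val
  have hC : C.PosDef := (hA.submatrix _).posDef_iff_det_ne_zero.2 hd
  let _ : Invertible C := invertibleOfIsUnitDet C (isUnit_iff_ne_zero.2 hd)
  have hcol : (A.submatrix (Subtype.val : J → Fin n) id)ᴴ = A.submatrix id Subtype.val := by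
    rw [conjTranspose_submatrix, hA.1]
  have hblocks : fromBlocks C (A.submatrix Subtype.val id) (A.submatrix Subtype.val id)ᴴ A =
      A.submatrix (Sum.elim Subtype.val id) (Sum.elim Subtype.val id) := by
    rw [hcol]
    ext (a | a) (b | b) <;> rfl
  have := (PosDef.fromBlocks₁₁ _ A hC).1 (hblocks ▸ hA.submatrix _)
  rwa [hcol] at this

end CrossApprox

section Esum

variable {n : ℕ} {A : Matrix (Fin n) (Fin n) ℝ}

theorem sortedDesc_eq_comp {m : ℕ} (f : Fin m → ℝ) :
    sortedDesc f = f ∘ Tuple.sort fun j => -f j := by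
  funext i
  simp [sortedDesc]

theorem Esum_eq_esymm_eigenvalues (hA : A.IsHermitian) (k : ℕ) :
    Esum A k = (univ.val.map hA.eigenvalues).esymm k :=
  hA.sum_det_submatrix_eq_esymm k

theorem Esum_eq_esymm (hA : A.IsHermitian) (k : ℕ) :
    Esum A k = (univ.val.map (sortedDesc hA.eigenvalues)).esymm k := by
  rw [sortedDesc_eq_comp, ← Multiset.map_map, Multiset.map_univ_val_equiv]
  exact Esum_eq_esymm_eigenvalues hA k

theorem Esum_pos_of_le_rank (hA : A.PosSemidef) {r : ℕ} (hrk : r ≤ A.rank) : 0 < Esum A r := by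
  rw [Esum_eq_esymm_eigenvalues hA.1]
  refine esymm_map_univ_pos hA.eigenvalues_nonneg ?_
  rwa [hA.1.rank_eq_card_non_zero_eigs, Fintype.card_subtype] at hrk

theorem Esum_succ_le (hA : A.PosSemidef) (r : ℕ) :
    Esum A (r + 1) ≤
      Esum A r * ∑ s ∈ univ.filter (fun s : Fin n => r ≤ (s : ℕ)), sortedDesc hA.1.eigenvalues s := by
  rw [Esum_eq_esymm hA.1, Esum_eq_esymm hA.1]
  refine esymm_succ_map_univ_le (fun i => ?_) _ fun K hK => Fin.exists_le_val_of_card_eq hK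
  rw [sortedDesc_eq_comp]
  exact hA.eigenvalues_nonneg _

theorem sum_sum_compl_pminor_insert (A : Matrix (Fin n) (Fin n) ℝ) (r : ℕ) :
    ∑ J ∈ powersetCard r univ, ∑ i ∈ Jᶜ, pminor A (insert i J) = (r + 1) * Esum A (r + 1) := by
  rw [sum_powersetCard_sum_compl_insert r fun K _ => pminor A K, Esum, mul_sum]
  refine sum_congr rfl fun K hK => ?_
  rw [sum_const, (mem_powersetCard.1 hK).2, nsmul_eq_mul]
  push_cast
  ring

end Esum

theorem exists_pminor_pos_trace_sub_crossApprox_le {n r : ℕ} {A : Matrix (Fin n) (Fin n) ℝ}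
    (hA : A.PosSemidef) (hrk : r ≤ A.rank) :
    ∃ J : Finset (Fin n), #J = r ∧ 0 < pminor A J ∧
      (A - crossApprox A J).trace ≤
        (r + 1) * ∑ s ∈ univ.filter (fun s : Fin n => r ≤ (s : ℕ)), sortedDesc hA.1.eigenvalues s := by
  set τ := ∑ s ∈ univ.filter (fun s : Fin n => r ≤ (s : ℕ)), sortedDesc hA.1.eigenvalues s
  obtain ⟨J, hJ, hJpos, hJle⟩ := exists_pos_le_mul_of_sum_le
    (a := fun J => ∑ i ∈ Jᶜ, pminor A (insert i J)) (c := (r + 1) * τ)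
    (fun J _ => sum_nonneg fun i _ => pminor_nonneg hA _) (fun J _ => pminor_nonneg hA J)
    (Esum_pos_of_le_rank hA hrk) <| by
      rw [sum_sum_compl_pminor_insert, mul_assoc, mul_comm τ]
      exact mul_le_mul_of_nonneg_left (Esum_succ_le hA r) (by positivity)
  refine ⟨J, (mem_powersetCard.1 hJ).2, hJpos, le_of_mul_le_mul_left ?_ hJpos⟩
  rw [pminor_mul_trace_sub_crossApprox hJpos.ne', mul_comm (pminor A J)]
  exact hJle

theorem exists_quasi_optimal_cross_frobenius_general {n r : ℕ}
    (A : Matrix (Fin n) (Fin n) ℝ) (hA : A.PosSemidef)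
    (hrk : r ≤ A.rank) :
    ∃ J : Finset (Fin n), J.card = r ∧ pminor A J ≠ 0 ∧
      frobNorm (A - crossApprox A J) ≤
        Real.sqrt ((n : ℝ) - r) * (r + 1 : ℝ) *
          Real.sqrt (∑ s ∈ Finset.univ.filter (fun s : Fin n => r ≤ (s : ℕ)),
            (sortedDesc hA.1.eigenvalues s) ^ 2) := by
  obtain ⟨J, hJ, hJpos, htrace⟩ := exists_pminor_pos_trace_sub_crossApprox_le hA hrk
  have hrn : r ≤ n := hrk.trans (by simpa using A.rank_le_card_width)
  have hcs := sum_le_sqrt_card_mul_sqrt_sum_sq {s : Fin n | r ≤ (s : ℕ)}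
    (sortedDesc hA.1.eigenvalues)
  rw [Fin.card_filter_le_val, Nat.cast_sub hrn] at hcs
  refine ⟨J, hJ, hJpos.ne', ?_⟩
  calc frobNorm (A - crossApprox A J) ≤ (A - crossApprox A J).trace :=
        (hA.sub_crossApprox hJpos.ne').frobNorm_le_trace
    _ ≤ (r + 1) * ∑ s ∈ univ.filter (fun s : Fin n => r ≤ (s : ℕ)), sortedDesc hA.1.eigenvalues s := htrace
    _ ≤ (r + 1) * (√((n : ℝ) - r) * √(∑ s ∈ univ.filter (fun s : Fin n => r ≤ (s : ℕ)),
          sortedDesc hA.1.eigenvalues s ^ 2)) := by gcongr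
    _ = _ := by ring

/-- For `A` SPSD of rank `k` and `1 ≤ r ≤ k`, there is an index set `J*` of
cardinality `r` with `A(J*,J*)` invertible and
`‖A - A_{J*}‖_F ≤ √(n-r) (r+1) √(∑_{s=r+1}^{n} σ_s(A)²)` (0-based: indices `s ≥ r`). -/
theorem exists_quasi_optimal_cross_frobenius {n r : ℕ}
    (A : Matrix (Fin n) (Fin n) ℝ) (hA : A.PosSemidef)
    (hr : 1 ≤ r) (hrk : r ≤ A.rank) :
    ∃ J : Finset (Fin n), J.card = r ∧ pminor A J ≠ 0 ∧
      frobNorm (A - crossApprox A J) ≤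
        Real.sqrt ((n : ℝ) - r) * (r + 1 : ℝ) *
          Real.sqrt (∑ s ∈ Finset.univ.filter (fun s : Fin n => r ≤ (s : ℕ)),
            (sortedDesc hA.1.eigenvalues s) ^ 2) :=
  exists_quasi_optimal_cross_frobenius_general A hA hrk
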